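/- arXiv:2507.17375 — 2 statements merged into one kernel-verified Lean document; each statement's English description precedes it below -/
import Mathlib

section
/- Let u : ℝ → ℝ be convex and define u⁺(t) = u(t) and u⁻(t) = u(−t) for t ≥ 0, with partial Legendre transforms û⁺(τ) = inf_{t ≥ 0}(u(t) − tτ) and û⁻(τ) = inf_{t ≥ 0}(u(−t) − tτ), and full transform û(τ) = inf_{t ∈ ℝ}(u(t) − tτ). Then for every τ ∈ ℝ: û⁺(τ) = sup_{σ ≥ τ} û(σ) and û⁻(τ) = sup_{σ ≤ −τ} û(σ). -/
/-!
If `c + t τ ≤ u t` on the ray `t ≥ 0`, convexity lets one tilt this line about `(0, c)` to a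
line `c + t σ`, `σ ≥ τ`, lying below `u` on all of `ℝ`: take `σ` at least the supremum of the
chord slopes from `(0, c)` to the left half of the graph, which by convexity are bounded by the
chord slopes to the right half. Hence every real below `û⁺(τ)` is below some `û(σ)`, `σ ≥ τ`; the
reverse inequality is immediate, and the statement for `û⁻` follows by applying this to `u ∘ neg`.
-/

open Set

namespace ConvexOn

variable {u : ℝ → ℝ}

lemma sub_div_le_sub_div_of_neg_of_pos (hu : ConvexOn ℝ univ u) {c s t : ℝ} (hc : c ≤ u 0)
    (hs : s < 0) (ht : 0 < t) : (u s - c) / s ≤ (u t - c) / t := by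
  calc (u s - c) / s = (c - u s) / (0 - s) := by rw [← neg_div_neg_eq, neg_sub, zero_sub]
    _ ≤ (u 0 - u s) / (0 - s) := by gcongr
    _ ≤ (u t - u 0) / (t - 0) := hu.slope_mono_adjacent (mem_univ s) (mem_univ t) hs ht
    _ ≤ (u t - c) / t := by rw [sub_zero]; gcongr

lemma exists_ge_forall_add_mul_le (hu : ConvexOn ℝ univ u) {c τ : ℝ}
    (h : ∀ t, 0 ≤ t → c + t * τ ≤ u t) : ∃ σ, τ ≤ σ ∧ ∀ t, c + t * σ ≤ u t := by
  have hc : c ≤ u 0 := by simpa using h 0 le_rfl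
  set S := (fun s => (u s - c) / s) '' Iio 0
  have hS : S.Nonempty := ⟨_, mem_image_of_mem _ (show (-1 : ℝ) ∈ Iio 0 by norm_num)⟩
  have hS_le : ∀ t, 0 < t → ∀ x ∈ S, x ≤ (u t - c) / t := by
    rintro t ht _ ⟨s, hs, rfl⟩
    exact hu.sub_div_le_sub_div_of_neg_of_pos hc hs ht
  refine ⟨max τ (sSup S), le_max_left _ _, fun t => ?_⟩
  rcases lt_trichotomy t 0 with ht | rfl | ht
  · have : (u t - c) / t ≤ max τ (sSup S) :=
      (le_csSup ⟨_, hS_le 1 one_pos⟩ (mem_image_of_mem _ ht)).trans (le_max_right _ _)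
    rw [div_le_iff_of_neg ht] at this
    linarith
  · simpa using hc
  · have : max τ (sSup S) ≤ (u t - c) / t :=
      max_le (by rw [le_div_iff₀ ht]; linarith [h t ht.le]) (csSup_le hS (hS_le t ht))
    rw [le_div_iff₀ ht] at this
    linarith

lemma iInf_nonneg_eq_iSup_ge (hu : ConvexOn ℝ univ u) (τ : ℝ) :
    ⨅ t : {t : ℝ // 0 ≤ t}, ((u t - t * τ : ℝ) : EReal) =
      ⨆ σ : {σ : ℝ // τ ≤ σ}, ⨅ t : ℝ, ((u t - t * σ : ℝ) : EReal) := by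
  refine le_antisymm (EReal.ge_of_forall_gt_iff_ge.1 fun c hc => ?_) ?_
  · have hray : ∀ t, 0 ≤ t → c + t * τ ≤ u t := fun t ht => by
      have := EReal.coe_le_coe_iff.1 (hc.le.trans (iInf_le _ ⟨t, ht⟩))
      linarith
    obtain ⟨σ, hτσ, hσ⟩ := hu.exists_ge_forall_add_mul_le hray
    refine le_iSup_of_le ⟨σ, hτσ⟩ (le_iInf fun t => EReal.coe_le_coe_iff.2 ?_)
    linarith [hσ t]
  · refine iSup_le fun σ => le_iInf fun t => (iInf_le _ t.1).trans (EReal.coe_le_coe_iff.2 ?_)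
    linarith [mul_le_mul_of_nonneg_left σ.2 t.2]

end ConvexOn

/-- The Legendre transforms of the two rays of a convex function on `ℝ`
are the restricted suprema of the Legendre transform of the line. -/
theorem legendre_rays_of_line (u : ℝ → ℝ)
    (hconv : ConvexOn ℝ Set.univ u)
    (uhat uhatp uhatm : ℝ → EReal)
    (huhat : ∀ τ : ℝ, uhat τ = ⨅ t : ℝ, ((u t - t * τ : ℝ) : EReal))
    (huhatp : ∀ τ : ℝ, uhatp τ = ⨅ t : {t : ℝ // 0 ≤ t}, ((u t.1 - t.1 * τ : ℝ) : EReal))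
    (huhatm : ∀ τ : ℝ, uhatm τ = ⨅ t : {t : ℝ // 0 ≤ t}, ((u (-t.1) - t.1 * τ : ℝ) : EReal)) :
    ∀ τ : ℝ,
      uhatp τ = (⨆ σ : {σ : ℝ // τ ≤ σ}, uhat σ.1) ∧
      uhatm τ = (⨆ σ : {σ : ℝ // σ ≤ -τ}, uhat σ.1) := by
  intro τ
  refine ⟨by simpa only [huhatp, huhat] using hconv.iInf_nonneg_eq_iSup_ge τ, ?_⟩
  have hreflect : ConvexOn ℝ univ (fun t => u (-t)) := hconv.comp_linearMap (-LinearMap.id)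
  have huhat_reflect : ∀ σ, ⨅ t : ℝ, ((u (-t) - t * σ : ℝ) : EReal) = uhat (-σ) := fun σ =>
    (huhat _).symm ▸ (Equiv.neg ℝ).iInf_congr fun t => by simp
  rw [huhatm, hreflect.iInf_nonneg_eq_iSup_ge τ]
  simp only [huhat_reflect]
  exact (Equiv.subtypeEquiv (Equiv.neg ℝ) fun _ => neg_le_neg_iff.symm).iSup_congr fun _ => rfl
end

section
/- Let φ₀, ψ₀, φ₁, ψ₁ ∈ ℝ and define f, g : ℝ → [−∞,∞) by f(τ) = (1−τ)φ₀ + τψ₀ for τ ∈ [0,1] (−∞ else) and g(τ) = (1−τ)φ₁ + τψ₁ for τ ∈ [0,1] (−∞ else). Then the supremal convolution h(τ) = sup_σ (f(τ−σ) + g(σ)) equals: (1−τ)(φ₀+φ₁) + τ·max(φ₀+ψ₁, φ₁+ψ₀) for 0 ≤ τ ≤ 1, (τ−1)(ψ₀+ψ₁) + (2−τ)·max(φ₀+ψ₁, φ₁+ψ₀) for 1 ≤ τ ≤ 2, and −∞ for τ ∉ [0,2]. -/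
/-!
For `s, t ∈ [0,1]` with `s + t = τ`, the sum `f s + g t` rearranges into
`(1 - τ)(φ₀ + φ₁) + s (φ₁ + ψ₀) + t (φ₀ + ψ₁)`, and also into
`(τ - 1)(ψ₀ + ψ₁) + (1 - t)(φ₁ + ψ₀) + (1 - s)(φ₀ + ψ₁)`.
When `τ ≤ 1` the weights `s, t` are nonnegative, when `τ ≥ 1` the weights `1 - t, 1 - s` are,
so bounding `φ₁ + ψ₀` and `φ₀ + ψ₁` by their maximum bounds the sum; the bound is attained at an
endpoint of the admissible segment, where one of the two weights vanishes.
Outside `[0, 2]` no decomposition `τ = s + t` exists, so every term of the supremum is `⊥`.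
-/

open Set

lemma mul_add_mul_le_add_mul_max {a b x y : ℝ} (ha : 0 ≤ a) (hb : 0 ≤ b) :
    a * x + b * y ≤ (a + b) * max x y := by
  nlinarith [mul_le_mul_of_nonneg_left (le_max_left x y) ha,
    mul_le_mul_of_nonneg_left (le_max_right x y) hb]

noncomputable def affineOnUnitInterval (a b τ : ℝ) : EReal :=
  if τ ∈ Icc (0 : ℝ) 1 then (((1 - τ) * a + τ * b : ℝ) : EReal) else ⊥

section SupConvolution

variable {φ₀ ψ₀ φ₁ ψ₁ s t : ℝ}

lemma affine_add_affine_le_of_nonneg (hs : 0 ≤ s) (ht : 0 ≤ t) :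
    (1 - s) * φ₀ + s * ψ₀ + ((1 - t) * φ₁ + t * ψ₁) ≤
      (1 - (s + t)) * (φ₀ + φ₁) + (s + t) * max (φ₀ + ψ₁) (φ₁ + ψ₀) := by
  nlinarith [mul_add_mul_le_add_mul_max (x := φ₀ + ψ₁) (y := φ₁ + ψ₀) ht hs]

lemma affine_add_affine_le_of_le_one (hs : s ≤ 1) (ht : t ≤ 1) :
    (1 - s) * φ₀ + s * ψ₀ + ((1 - t) * φ₁ + t * ψ₁) ≤
      (s + t - 1) * (ψ₀ + ψ₁) + (2 - (s + t)) * max (φ₀ + ψ₁) (φ₁ + ψ₀) := by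
  nlinarith [mul_add_mul_le_add_mul_max (x := φ₀ + ψ₁) (y := φ₁ + ψ₀)
    (sub_nonneg.2 hs) (sub_nonneg.2 ht)]

lemma iSup_affineOnUnitInterval_add_eq_coe {τ c : ℝ}
    (hle : ∀ s ∈ Icc (0 : ℝ) 1, ∀ t ∈ Icc (0 : ℝ) 1, s + t = τ →
      (1 - s) * φ₀ + s * ψ₀ + ((1 - t) * φ₁ + t * ψ₁) ≤ c)
    (hattain : ∃ s ∈ Icc (0 : ℝ) 1, ∃ t ∈ Icc (0 : ℝ) 1, s + t = τ ∧
      (1 - s) * φ₀ + s * ψ₀ + ((1 - t) * φ₁ + t * ψ₁) = c) :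
    ⨆ σ : ℝ, affineOnUnitInterval φ₀ ψ₀ (τ - σ) + affineOnUnitInterval φ₁ ψ₁ σ = c := by
  refine le_antisymm (iSup_le fun σ => ?_) ?_
  · unfold affineOnUnitInterval
    split_ifs with hs ht ht
    · exact_mod_cast hle _ hs _ ht (sub_add_cancel τ σ)
    all_goals simp
  · obtain ⟨s, hs, t, ht, rfl, hc⟩ := hattain
    refine le_iSup_of_le t (le_of_eq ?_)
    rw [add_sub_cancel_right, affineOnUnitInterval, affineOnUnitInterval, if_pos hs, if_pos ht,
      ← hc, EReal.coe_add]

lemma iSup_affineOnUnitInterval_add_eq_bot {τ : ℝ}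
    (hτ : ∀ s ∈ Icc (0 : ℝ) 1, ∀ t ∈ Icc (0 : ℝ) 1, s + t ≠ τ) :
    ⨆ σ : ℝ, affineOnUnitInterval φ₀ ψ₀ (τ - σ) + affineOnUnitInterval φ₁ ψ₁ σ = ⊥ := by
  refine le_bot_iff.1 (iSup_le fun σ => ?_)
  unfold affineOnUnitInterval
  split_ifs with hs ht
  · exact absurd (sub_add_cancel τ σ) (hτ _ hs _ ht)
  all_goals simp

end SupConvolution

/-- Supremal convolution of two affine-on-`[0,1]` concave functions. -/
theorem sup_convolution_affine (φ₀ ψ₀ φ₁ ψ₁ : ℝ) (f g h : ℝ → EReal)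
    (hf : ∀ τ : ℝ, f τ = if τ ∈ Set.Icc (0 : ℝ) 1
        then (((1 - τ) * φ₀ + τ * ψ₀ : ℝ) : EReal) else ⊥)
    (hg : ∀ τ : ℝ, g τ = if τ ∈ Set.Icc (0 : ℝ) 1
        then (((1 - τ) * φ₁ + τ * ψ₁ : ℝ) : EReal) else ⊥)
    (hh : ∀ τ : ℝ, h τ = ⨆ σ : ℝ, (f (τ - σ) + g σ)) :
    (∀ τ ∈ Set.Icc (0 : ℝ) 1,
        h τ = (((1 - τ) * (φ₀ + φ₁) + τ * max (φ₀ + ψ₁) (φ₁ + ψ₀) : ℝ) : EReal)) ∧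
    (∀ τ ∈ Set.Icc (1 : ℝ) 2,
        h τ = (((τ - 1) * (ψ₀ + ψ₁) + (2 - τ) * max (φ₀ + ψ₁) (φ₁ + ψ₀) : ℝ) : EReal)) ∧
    (∀ τ : ℝ, τ ∉ Set.Icc (0 : ℝ) 2 → h τ = ⊥) := by
  obtain rfl : f = affineOnUnitInterval φ₀ ψ₀ := funext hf
  obtain rfl : g = affineOnUnitInterval φ₁ ψ₁ := funext hg
  refine ⟨fun τ ⟨hτ₀, hτ₁⟩ => ?_, fun τ ⟨hτ₁, hτ₂⟩ => ?_, fun τ hτ => ?_⟩ <;> rw [hh]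
  · refine iSup_affineOnUnitInterval_add_eq_coe
      (fun s hs t ht hst => hst ▸ affine_add_affine_le_of_nonneg hs.1 ht.1) ?_
    rcases le_total (φ₁ + ψ₀) (φ₀ + ψ₁) with hmax | hmax
    · exact ⟨0, ⟨le_rfl, zero_le_one⟩, τ, ⟨hτ₀, hτ₁⟩, zero_add τ, by rw [max_eq_left hmax]; ring⟩
    · exact ⟨τ, ⟨hτ₀, hτ₁⟩, 0, ⟨le_rfl, zero_le_one⟩, add_zero τ, by rw [max_eq_right hmax]; ring⟩
  · refine iSup_affineOnUnitInterval_add_eq_coe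
      (fun s hs t ht hst => hst ▸ affine_add_affine_le_of_le_one hs.2 ht.2) ?_
    rcases le_total (φ₁ + ψ₀) (φ₀ + ψ₁) with hmax | hmax
    · exact ⟨τ - 1, ⟨by linarith, by linarith⟩, 1, ⟨zero_le_one, le_rfl⟩, sub_add_cancel τ 1,
        by rw [max_eq_left hmax]; ring⟩
    · exact ⟨1, ⟨zero_le_one, le_rfl⟩, τ - 1, ⟨by linarith, by linarith⟩, add_sub_cancel 1 τ,
        by rw [max_eq_right hmax]; ring⟩
  · refine iSup_affineOnUnitInterval_add_eq_bot fun s hs t ht hst => hτ ?_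
    exact ⟨hst ▸ add_nonneg hs.1 ht.1, hst ▸ (add_le_add hs.2 ht.2).trans_eq one_add_one_eq_two⟩
end
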